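/- Counting version of the Θ recursion: let I(A) denote the number of unordered increasing trees on a finite set A of positive integers, weighted by ∏_{i ∈ A∖{min A}} |h_T(i)|, i.e., I(A) = ∑_T ∏_{i≠min A} |h_T(i)|, with I(A) = 1 when |A| = 1. Then I(A) = |A|^{|A|-2} for |A| ≥ 2, and for any fixed a ∈ A∖{min A}, |A|^{|A|-2} = ∑_{B ⊔ C = A, min A ∈ C, a ∈ B} |B|·|B|^{|B|-2}·|C|^{|C|-2} where k^{k-2} is interpreted as 1 when k = 1. -/

import Mathlib

/-!
The second smallest vertex `s` of an increasing tree on `A` is a child of the root `min A`.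
Cutting the edge between them splits the tree into the subtree `B` rooted at `s` and an
increasing tree on `A \ B`; the hook of `s` is `B`, every other non-root hook is a hook of one of
the two pieces, and conversely any pair of increasing trees on `B` and on `A \ B` grafts back
together. Hence `I(A) = ∑_{s ∈ B ∌ min A} |B| I(B) I(A \ B)`, and induction on `|A|` reduces
`I(A) = |A| ^ (|A| - 2)` to the second claim, which after counting the sets `B` of each size is
Abel's identity `∑_j C(m,j) (j+1)^j (m-j+1)^(m-j-1) = (m+2)^m`. That identity is proved for
polynomials by induction: the derivatives of both sides satisfy the identity of one degree less,
and at the root of the right-hand side the left-hand side is an `(m+1)`-st forward difference of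
a polynomial of degree `m`.
-/

/-- The minimum of a finite set of naturals (`0` for the empty set). -/
def fmin (B : Finset ℕ) : ℕ := WithTop.untopD 0 B.min

open scoped Classical in
/-- `I(A)`: the number of unordered increasing trees on `A` (encoded by parent functions
`p : A → A` fixing the root `min A` and decreasing off the root), weighted by
`∏_{i ∈ A ∖ {min A}} |h_T(i)|`, the product of subtree sizes over non-root vertices. -/
noncomputable def Icount (A : Finset ℕ) : ℕ :=
  ∑ p ∈ (Finset.univ : Finset (↥A → ↥A)).filter
      (fun p => ∀ v : ↥A, ((v : ℕ) = fmin A → p v = v) ∧ ((v : ℕ) ≠ fmin A → (p v : ℕ) < (v : ℕ))),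
    ∏ v ∈ Finset.univ.filter (fun v : ↥A => (v : ℕ) ≠ fmin A),
      (Finset.univ.filter (fun u : ↥A => ∃ k : ℕ, p^[k] u = v)).card

open Finset Polynomial fwdDiff

theorem Polynomial.eq_of_derivative_eq_of_eval_eq {R : Type*} [CommRing R] [IsAddTorsionFree R]
    {p q : R[X]} (h : derivative p = derivative q) (t : R) (ht : p.eval t = q.eval t) :
    p = q := by
  have hpq := eq_C_of_derivative_eq_zero (p := p - q) (by rw [derivative_sub, h, sub_self])
  have h0 : (p - q).coeff 0 = 0 := by
    simpa [ht] using (congrArg (eval t) hpq).symm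
  rwa [h0, map_zero, sub_eq_zero] at hpq

theorem sum_neg_one_pow_mul_choose_mul_pow_eq_zero {m n : ℕ} (h : m < n) (y : ℤ) :
    ∑ k ∈ range (n + 1), (-1 : ℤ) ^ (n - k) * n.choose k * (y + k) ^ m = 0 := by
  have := congrFun (fwdDiff_iter_pow_eq_zero_of_lt (R := ℤ) h) y
  rw [fwdDiff_iter_eq_sum_shift] at this
  simpa using this

/-- Abel's polynomial `∑ C(m,j) x (x + m - j)^(m-j-1) (X + c + j)^j` at `x = 1`; at `j = m` the
truncated exponent `0 - 1 = 0` gives the correct coefficient `x · x⁻¹ = 1`. -/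
noncomputable def abelPoly (m : ℕ) (c : ℤ) : ℤ[X] :=
  ∑ j ∈ range (m + 1),
    C (m.choose j * ((m - j : ℕ) + 1 : ℤ) ^ (m - j - 1)) * (X + C (c + j)) ^ j

theorem derivative_abelPoly (m : ℕ) (c : ℤ) :
    derivative (abelPoly (m + 1) c) = C ((m + 1 : ℕ) : ℤ) * abelPoly m (c + 1) := by
  have hterm : ∀ i ∈ range (m + 1),
      derivative (C (((m + 1).choose (i + 1) : ℕ) * ((m + 1 - (i + 1) : ℕ) + 1 : ℤ) ^
        (m + 1 - (i + 1) - 1)) * (X + C (c + (i + 1 : ℕ))) ^ (i + 1)) =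
      C ((m + 1 : ℕ) : ℤ) * (C ((m.choose i : ℤ) * ((m - i : ℕ) + 1 : ℤ) ^ (m - i - 1)) *
        (X + C (c + 1 + i)) ^ i) := by
    intro i _
    have hchoose : ((m + 1).choose (i + 1) * (i + 1) : ℤ) = (m + 1) * m.choose i := by
      exact_mod_cast (Nat.add_one_mul_choose_eq m i).symm
    rw [derivative_C_mul, derivative_X_add_C_pow, Nat.add_sub_cancel, ← mul_assoc, ← mul_assoc,
      ← C_mul, ← C_mul, show m + 1 - (i + 1) = m - i by omega]
    congr 2
    · push_cast
      linear_combination ((m - i : ℕ) + 1 : ℤ) ^ (m - i - 1) * hchoose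
    · push_cast
      ring_nf
  rw [abelPoly, abelPoly, derivative_sum, sum_range_succ', sum_congr rfl hterm, ← mul_sum]
  simp only [pow_zero, mul_one, derivative_C, add_zero]

theorem eval_abelPoly (m : ℕ) (c : ℤ) : (abelPoly (m + 1) c).eval (-(c + m + 2)) = 0 := by
  -- with `k = m + 1 - j`: `(k + 1) ^ (k - 1) * (-(k + 1)) ^ j = -(-1) ^ k * (-(k + 1)) ^ m`
  have hterm : ∀ j ∈ range (m + 1 + 1),
      eval (-(c + m + 2)) (C (((m + 1).choose j : ℤ) * ((m + 1 - j : ℕ) + 1 : ℤ) ^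
        (m + 1 - j - 1)) * (X + C (c + j)) ^ j) =
      -((-1) ^ (m + 1 - j) * ((m + 1).choose j : ℤ) * (-(m + 2 : ℤ) + j) ^ m) := by
    intro j hj
    obtain ⟨k, hk⟩ : ∃ k, m + 1 - j = k := ⟨_, rfl⟩
    have hjk : j + k = m + 1 := by have := mem_range.1 hj; omega
    have hjk' : (j + k : ℤ) = m + 1 := by exact_mod_cast hjk
    have hx : -(c + m + 2) + (c + j) = -((k : ℤ) + 1) := by linear_combination hjk'
    have hy : -(m + 2 : ℤ) + j = -((k : ℤ) + 1) := by linear_combination hjk'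
    simp only [eval_mul, eval_C, eval_pow, eval_add, eval_X, hk, hx, hy]
    rcases k with _ | k
    · obtain rfl : j = m + 1 := by omega
      simp [pow_succ]
    · obtain rfl : m = j + k := by omega
      have h : ((-1 : ℤ) ^ k) * (-1) ^ k = 1 := by rw [← mul_pow]; norm_num
      simp only [Nat.add_sub_cancel, pow_add _ j k, neg_pow ((k + 1 : ℕ) + 1 : ℤ) k, pow_succ]
      linear_combination -(((j + k + 1).choose j : ℤ) * (-((k + 1 : ℕ) + 1 : ℤ)) ^ j *
        ((k + 1 : ℕ) + 1 : ℤ) ^ k) * h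
  rw [abelPoly, eval_finsetSum, sum_congr rfl hterm, sum_neg_distrib,
    sum_neg_one_pow_mul_choose_mul_pow_eq_zero (Nat.lt_succ_self m), neg_zero]

theorem abelPoly_eq (m : ℕ) (c : ℤ) : abelPoly m c = (X + C (c + m + 1)) ^ m := by
  induction m generalizing c with
  | zero => simp [abelPoly]
  | succ m ih =>
    refine eq_of_derivative_eq_of_eval_eq ?_ (-(c + m + 2)) ?_
    · rw [derivative_abelPoly, ih, derivative_X_add_C_pow, Nat.add_sub_cancel,
        show c + 1 + m + 1 = c + (m + 1 : ℕ) + 1 by push_cast; ring]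
    · rw [eval_abelPoly, eval_pow, eval_add, eval_X, eval_C,
        show -(c + m + 2) + (c + (m + 1 : ℕ) + 1) = 0 by push_cast; ring, zero_pow m.succ_ne_zero]

theorem sum_choose_mul_add_one_pow_mul_add_one_pow (m : ℕ) :
    ∑ j ∈ range (m + 1), m.choose j * (j + 1) ^ j * (m - j + 1) ^ (m - j - 1) =
      (m + 2) ^ m := by
  have h := congrArg (eval (1 : ℤ)) (abelPoly_eq m 0)
  simp only [abelPoly, eval_finsetSum, eval_mul, eval_C, eval_pow, eval_add, eval_X,
    zero_add] at h
  zify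
  rw [show (m + 2 : ℤ) = 1 + (m + 1) by ring, ← h]
  exact sum_congr rfl fun j _ ↦ by ring

theorem sum_powerset_filter_mem_notMem {α M : Type*} [DecidableEq α] [AddCommMonoid M]
    {A : Finset α} {a b : α} (ha : a ∈ A) (hb : b ∈ A) (hab : a ≠ b) (f : ℕ → M) :
    ∑ B ∈ A.powerset.filter (fun B => a ∈ B ∧ b ∉ B), f #B =
      ∑ j ∈ range (#A - 1), (#A - 2).choose j • f (j + 1) := by
  set D := (A.erase a).erase b
  have haD : a ∉ D := fun h ↦ (mem_erase.1 (mem_erase.1 h).2).1 rfl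
  have hD : #D = #A - 2 := by
    rw [card_erase_of_mem (mem_erase.2 ⟨hab.symm, hb⟩), card_erase_of_mem ha, Nat.sub_sub]
  have himage : A.powerset.filter (fun B => a ∈ B ∧ b ∉ B) = D.powerset.image (insert a) := by
    ext B
    simp only [mem_filter, mem_powerset, mem_image]
    constructor
    · rintro ⟨hBA, haB, hbB⟩
      refine ⟨B.erase a, fun x hx ↦ ?_, insert_erase haB⟩
      obtain ⟨hxa, hxB⟩ := mem_erase.1 hx
      exact mem_erase.2 ⟨fun h ↦ hbB (h ▸ hxB), mem_erase.2 ⟨hxa, hBA hxB⟩⟩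
    · rintro ⟨S, hSD, rfl⟩
      refine ⟨insert_subset ha (hSD.trans ((erase_subset _ _).trans (erase_subset _ _))),
        mem_insert_self _ _, fun hb' ↦ ?_⟩
      rcases mem_insert.1 hb' with h | h
      · exact hab h.symm
      · exact (mem_erase.1 (hSD h)).1 rfl
  rw [himage, sum_image fun S hS T hT ↦ insert_erase_invOn.2.injOn
      (notMem_mono (mem_powerset.1 hS) haD) (notMem_mono (mem_powerset.1 hT) haD),
    sum_congr rfl fun S hS ↦ by
      rw [card_insert_of_notMem (notMem_mono (mem_powerset.1 hS) haD)],
    sum_powerset_apply_card (fun k ↦ f (k + 1)), hD]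
  have : 1 < #A := one_lt_card.2 ⟨a, ha, b, hb, hab⟩
  rw [show #A - 2 + 1 = #A - 1 by omega]

theorem card_pow_card_sub_two_eq_sum {α : Type*} [DecidableEq α] {A : Finset α} {a b : α}
    (ha : a ∈ A) (hb : b ∈ A) (hab : a ≠ b) :
    #A ^ (#A - 2) = ∑ B ∈ A.powerset.filter (fun B => a ∈ B ∧ b ∉ B),
      #B * #B ^ (#B - 2) * #(A \ B) ^ (#(A \ B) - 2) := by
  have hA : 1 < #A := one_lt_card.2 ⟨a, ha, b, hb, hab⟩
  obtain ⟨m, hm⟩ : ∃ m, #A = m + 2 := ⟨#A - 2, by omega⟩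
  rw [sum_congr rfl fun B hB ↦ by
      rw [card_sdiff_of_subset (mem_powerset.1 (mem_filter.1 hB).1)],
    sum_powerset_filter_mem_notMem ha hb hab fun k ↦ k * k ^ (k - 2) * (#A - k) ^ (#A - k - 2),
    hm, Nat.add_sub_cancel, show m + 2 - 1 = m + 1 by omega,
    ← sum_choose_mul_add_one_pow_mul_add_one_pow m]
  refine sum_congr rfl fun j hj ↦ ?_
  have hjm : j ≤ m := Nat.lt_succ_iff.1 (mem_range.1 hj)
  have hpow : (j + 1) * (j + 1) ^ (j + 1 - 2) = (j + 1) ^ j := by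
    rcases j with _ | j
    · rfl
    · rw [show j + 1 + 1 - 2 = j by omega, ← pow_succ']
  rw [smul_eq_mul, show m + 2 - (j + 1) = m - j + 1 by omega,
    show m - j + 1 - 2 = m - j - 1 by omega, hpow, mul_assoc]

open scoped Classical

section Fmin

variable {A B : Finset ℕ} {x : ℕ}

theorem fmin_eq_min' (h : B.Nonempty) : fmin B = B.min' h := by
  rw [fmin, ← coe_min' h]
  rfl

theorem fmin_mem (h : B.Nonempty) : fmin B ∈ B :=
  fmin_eq_min' h ▸ B.min'_mem h

theorem fmin_le (hx : x ∈ B) : fmin B ≤ x :=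
  fmin_eq_min' ⟨x, hx⟩ ▸ B.min'_le x hx

theorem fmin_eq_of_mem_of_forall_le (hx : x ∈ B) (h : ∀ y ∈ B, x ≤ y) : fmin B = x :=
  le_antisymm (fmin_le hx) (h _ (fmin_mem ⟨x, hx⟩))

theorem fmin_sdiff (hmA : fmin A ∈ A) (hmB : fmin A ∉ B) : fmin (A \ B) = fmin A :=
  fmin_eq_of_mem_of_forall_le (mem_sdiff.2 ⟨hmA, hmB⟩) fun _ hy ↦ fmin_le (mem_sdiff.1 hy).1

end Fmin

variable {A B D : Finset ℕ}

def IsIncreasingTree (A : Finset ℕ) (p : A → A) : Prop :=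
  ∀ v : A, ((v : ℕ) = fmin A → p v = v) ∧ ((v : ℕ) ≠ fmin A → (p v : ℕ) < v)

/-- The hook `h_T(x)`, taken in `ℕ` so that hooks in trees on different vertex sets compare. -/
noncomputable def hook (p : A → A) (x : ℕ) : Finset ℕ :=
  ({u : A | ∃ k, (p^[k] u : ℕ) = x} : Finset A).map (Function.Embedding.subtype _)

noncomputable def hookWeight (p : A → A) : ℕ :=
  ∏ x ∈ A.erase (fmin A), #(hook p x)

theorem mem_hook {p : A → A} {x y : ℕ} :
    y ∈ hook p x ↔ ∃ hy : y ∈ A, ∃ k, (p^[k] ⟨y, hy⟩ : ℕ) = x := by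
  simp [hook]

theorem coe_mem_hook {p : A → A} {x : ℕ} {u : A} :
    (u : ℕ) ∈ hook p x ↔ ∃ k, (p^[k] u : ℕ) = x :=
  mem_hook.trans ⟨fun ⟨_, h⟩ ↦ h, fun h ↦ ⟨u.2, h⟩⟩

theorem hook_subset (p : A → A) (x : ℕ) : hook p x ⊆ A :=
  fun _ hy ↦ (mem_hook.1 hy).1

theorem Icount_eq_sum_hookWeight (A : Finset ℕ) :
    Icount A = ∑ p with IsIncreasingTree A p, hookWeight p := by
  refine sum_congr (by ext; simp [IsIncreasingTree]) fun p _ ↦ ?_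
  have hA : A.erase (fmin A) = ({v : A | (v : ℕ) ≠ fmin A} : Finset A).map
      (Function.Embedding.subtype _) := by
    ext; simp [and_comm]
  rw [hookWeight, hA, prod_map]
  refine prod_congr rfl fun v _ ↦ ?_
  rw [hook, card_map]
  simp only [Subtype.ext_iff]
  rfl

namespace IsIncreasingTree

variable {p : A → A}

theorem apply_le (hp : IsIncreasingTree A p) (u : A) : (p u : ℕ) ≤ u := by
  by_cases h : (u : ℕ) = fmin A
  · rw [(hp u).1 h]
  · exact ((hp u).2 h).le

theorem iterate_le (hp : IsIncreasingTree A p) (k : ℕ) (u : A) : (p^[k] u : ℕ) ≤ u := by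
  induction k generalizing u with
  | zero => rfl
  | succ k ih => exact (ih (p u)).trans (hp.apply_le u)

theorem iterate_root (hp : IsIncreasingTree A p) {u : A} (hu : (u : ℕ) = fmin A) (k : ℕ) :
    p^[k] u = u :=
  Function.iterate_fixed ((hp u).1 hu) k

end IsIncreasingTree

theorem Icount_of_card_le_one (h : #A ≤ 1) : Icount A = 1 := by
  have hsub : ∀ u v : A, u = v := fun u v ↦ Subtype.ext (card_le_one.1 h _ u.2 _ v.2)
  have hroot : ∀ u : A, (u : ℕ) = fmin A :=
    fun u ↦ congrArg Subtype.val (hsub u ⟨_, fmin_mem ⟨u, u.2⟩⟩)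
  have htree : ∀ p : A → A, IsIncreasingTree A p :=
    fun p v ↦ ⟨fun _ ↦ hsub _ _, fun hv ↦ (hv (hroot v)).elim⟩
  have hweight : ∀ p : A → A, hookWeight p = 1 := by
    intro p
    rw [hookWeight, eq_empty_of_forall_notMem fun x hx ↦
      (mem_erase.1 hx).1 (hroot ⟨x, (mem_erase.1 hx).2⟩), prod_empty]
  rw [Icount_eq_sum_hookWeight, filter_true_of_mem fun p _ ↦ htree p]
  simp only [hweight, sum_const, card_univ, Fintype.card_fun, Fintype.card_coe, smul_eq_mul,
    mul_one]
  interval_cases #A <;> rfl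

noncomputable def treeRestrict (hDA : D ⊆ A) (p : A → A) (v : D) : D :=
  if hv : (p ⟨v, hDA v.2⟩ : ℕ) ∈ D then ⟨p ⟨v, hDA v.2⟩, hv⟩ else v

theorem coe_treeRestrict_of_mem {hDA : D ⊆ A} {p : A → A} {v : D}
    (hv : (p ⟨v, hDA v.2⟩ : ℕ) ∈ D) :
    (treeRestrict hDA p v : ℕ) = p ⟨v, hDA v.2⟩ := by
  rw [treeRestrict, dif_pos hv]

theorem treeRestrict_of_notMem {hDA : D ⊆ A} {p : A → A} {v : D}
    (hv : (p ⟨v, hDA v.2⟩ : ℕ) ∉ D) : treeRestrict hDA p v = v := by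
  rw [treeRestrict, dif_neg hv]

theorem hook_eq_hook_of_agree (hDA : D ⊆ A) {p : A → A} {q : D → D}
    (hq : IsIncreasingTree D q)
    (hpq : ∀ v : D, (v : ℕ) ≠ fmin D → (p ⟨v, hDA v.2⟩ : ℕ) = q v)
    (hback : ∀ w : A, (p w : ℕ) ∈ D.erase (fmin D) → (w : ℕ) ∈ D.erase (fmin D))
    {x : ℕ} (hx : x ∈ D.erase (fmin D)) : hook q x = hook p x := by
  have lift : ∀ k x, x ∈ D.erase (fmin D) → ∀ w : A, (p^[k] w : ℕ) = x →
      ∃ hw : (w : ℕ) ∈ D, (q^[k] ⟨w, hw⟩ : ℕ) = x := by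
    intro k
    induction k with
    | zero => intro x hx w hw; exact ⟨hw ▸ (mem_erase.1 hx).2, hw⟩
    | succ k ih =>
      intro x hx w hw
      rw [Function.iterate_succ_apply'] at hw
      have hk := hback _ (hw ▸ hx)
      obtain ⟨hwD, hqw⟩ := ih _ hk w rfl
      refine ⟨hwD, ?_⟩
      rw [Function.iterate_succ_apply', ← hw, ← hpq _ (hqw ▸ (mem_erase.1 hk).1)]
      congr 2
      exact Subtype.ext hqw
  have descend : ∀ k (v : D), (q^[k] v : ℕ) ≠ fmin D →
      (p^[k] ⟨v, hDA v.2⟩ : ℕ) = q^[k] v := by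
    intro k
    induction k with
    | zero => intro v _; rfl
    | succ k ih =>
      intro v hv
      rw [Function.iterate_succ_apply'] at hv ⊢
      have hk : (q^[k] v : ℕ) ≠ fmin D := fun h ↦ hv (by rw [(hq _).1 h, h])
      rw [Function.iterate_succ_apply', ← hpq _ hk]
      congr 2
      exact Subtype.ext (ih v hk)
  ext y
  simp only [mem_hook]
  constructor
  · rintro ⟨hyD, k, hk⟩
    exact ⟨hDA hyD, k, (descend k _ (hk ▸ (mem_erase.1 hx).1)).trans hk⟩
  · rintro ⟨hyA, k, hk⟩
    obtain ⟨hyD, hk'⟩ := lift k x hx ⟨y, hyA⟩ hk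
    exact ⟨hyD, k, hk'⟩

/-- `B` is the vertex set of the subtree of `p` rooted at `fmin B`, a child of the root. -/
structure IsRootBranch (p : A → A) (B : Finset ℕ) : Prop where
  mapsTo : ∀ u : A, (u : ℕ) ∈ B.erase (fmin B) → (p u : ℕ) ∈ B
  apply_fmin : ∀ u : A, (u : ℕ) = fmin B → (p u : ℕ) = fmin A
  mapsTo_compl : ∀ u : A, (u : ℕ) ∉ B → (p u : ℕ) ∉ B

noncomputable def graft (hBA : B ⊆ A) (root : A) (q : B → B) (r : ↥(A \ B) → ↥(A \ B))
    (u : A) : A :=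
  if hu : (u : ℕ) ∈ B then
    if (u : ℕ) = fmin B then root else ⟨q ⟨u, hu⟩, hBA (q ⟨u, hu⟩).2⟩
  else ⟨r ⟨u, mem_sdiff.2 ⟨u.2, hu⟩⟩, (mem_sdiff.1 (r _).2).1⟩

section RootBranch

variable (hBA : B ⊆ A) {p : A → A} {q : B → B} {r : ↥(A \ B) → ↥(A \ B)} {root : A}

theorem isIncreasingTree_treeRestrict_left (hp : IsIncreasingTree A p) (hb : IsRootBranch p B)
    (hmB : fmin A ∉ B) : IsIncreasingTree B (treeRestrict hBA p) := by
  intro v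
  refine ⟨fun hv ↦ treeRestrict_of_notMem ?_, fun hv ↦ ?_⟩
  · rw [hb.apply_fmin _ hv]
    exact hmB
  · have hpv := hb.mapsTo ⟨v, hBA v.2⟩ (mem_erase.2 ⟨hv, v.2⟩)
    rw [coe_treeRestrict_of_mem hpv]
    exact (hp _).2 fun h ↦ hmB (h ▸ v.2)

theorem isIncreasingTree_treeRestrict_right (hp : IsIncreasingTree A p) (hb : IsRootBranch p B)
    (hmA : fmin A ∈ A) (hmB : fmin A ∉ B) :
    IsIncreasingTree (A \ B) (treeRestrict sdiff_subset p) := by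
  intro v
  have hpv : (p ⟨v, sdiff_subset v.2⟩ : ℕ) ∈ A \ B :=
    mem_sdiff.2 ⟨coe_mem _, hb.mapsTo_compl _ (mem_sdiff.1 v.2).2⟩
  rw [fmin_sdiff hmA hmB]
  refine ⟨fun hv ↦ Subtype.ext ?_, fun hv ↦ ?_⟩ <;> rw [coe_treeRestrict_of_mem hpv]
  · exact congrArg Subtype.val ((hp _).1 hv)
  · exact (hp _).2 hv

theorem isIncreasingTree_graft (hq : IsIncreasingTree B q) (hr : IsIncreasingTree (A \ B) r)
    (hroot : (root : ℕ) = fmin A) (hmB : fmin A ∉ B) :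
    IsIncreasingTree A (graft hBA root q r) := by
  have hC := fmin_sdiff (hroot ▸ root.2) hmB
  intro v
  constructor
  · intro hv
    have hvB : (v : ℕ) ∉ B := hv ▸ hmB
    rw [graft, dif_neg hvB]
    have hrv := (hr ⟨v, mem_sdiff.2 ⟨v.2, hvB⟩⟩).1 (hv.trans hC.symm)
    exact Subtype.ext (show (r _ : ℕ) = v by rw [hrv])
  · intro hv
    unfold graft
    split_ifs with hvB hvm
    · exact hroot ▸ (fmin_le v.2).lt_of_ne' hv
    · exact (hq _).2 hvm
    · exact (hr _).2 (hC ▸ hv)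

theorem isRootBranch_graft (hroot : (root : ℕ) = fmin A) (hBne : B.Nonempty) :
    IsRootBranch (graft hBA root q r) B where
  mapsTo u hu := by
    rw [graft, dif_pos (mem_erase.1 hu).2, if_neg (mem_erase.1 hu).1]
    exact coe_mem _
  apply_fmin u hu := by
    rw [graft, dif_pos (hu ▸ fmin_mem hBne), if_pos hu, hroot]
  mapsTo_compl u hu := by
    rw [graft, dif_neg hu]
    exact (mem_sdiff.1 (coe_mem _)).2

theorem treeRestrict_graft_left (hq : IsIncreasingTree B q) (hroot : (root : ℕ) = fmin A)
    (hmB : fmin A ∉ B) : treeRestrict hBA (graft hBA root q r) = q := by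
  funext v
  by_cases hv : (v : ℕ) = fmin B
  · rw [treeRestrict_of_notMem, (hq v).1 hv]
    rwa [graft, dif_pos v.2, if_pos hv, hroot]
  · have hg : (graft hBA root q r ⟨v, hBA v.2⟩ : ℕ) = q v := by
      rw [graft, dif_pos v.2, if_neg hv]
    exact Subtype.ext ((coe_treeRestrict_of_mem (hg ▸ coe_mem _)).trans hg)

theorem treeRestrict_graft_right : treeRestrict sdiff_subset (graft hBA root q r) = r := by
  funext v
  have hg : (graft hBA root q r ⟨v, sdiff_subset v.2⟩ : ℕ) = r v := by
    rw [graft, dif_neg (mem_sdiff.1 v.2).2]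
  exact Subtype.ext ((coe_treeRestrict_of_mem (hg ▸ coe_mem _)).trans hg)

theorem graft_treeRestrict (hb : IsRootBranch p B) (hroot : (root : ℕ) = fmin A) :
    graft hBA root (treeRestrict hBA p) (treeRestrict sdiff_subset p) = p := by
  funext u
  apply Subtype.ext
  unfold graft
  split_ifs with huB hum
  · rw [hroot, hb.apply_fmin u hum]
  · exact coe_treeRestrict_of_mem (hb.mapsTo u (mem_erase.2 ⟨hum, huB⟩))
  · exact coe_treeRestrict_of_mem (mem_sdiff.2 ⟨coe_mem _, hb.mapsTo_compl u huB⟩)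

theorem IsRootBranch.exists_iterate_eq_fmin (hp : IsIncreasingTree A p) (hb : IsRootBranch p B)
    (hmB : fmin A ∉ B) (u : A) (hu : (u : ℕ) ∈ B) : ∃ k, (p^[k] u : ℕ) = fmin B := by
  induction h : (u : ℕ) using Nat.strong_induction_on generalizing u with
  | _ n ih =>
    by_cases hum : (u : ℕ) = fmin B
    · exact ⟨0, hum⟩
    obtain ⟨k, hk⟩ := ih _ (h ▸ (hp u).2 fun h ↦ hmB (h ▸ hu)) (p u)
      (hb.mapsTo u (mem_erase.2 ⟨hum, hu⟩)) rfl
    exact ⟨k + 1, hk⟩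

include hBA in
theorem hook_eq_of_isRootBranch (hp : IsIncreasingTree A p) (hb : IsRootBranch p B)
    (hmB : fmin A ∉ B) (hBne : B.Nonempty) : hook p (fmin B) = B := by
  ext y
  refine ⟨fun hy ↦ ?_, fun hy ↦
    coe_mem_hook.2 (hb.exists_iterate_eq_fmin hp hmB ⟨y, hBA hy⟩ hy)⟩
  obtain ⟨hyA, k, hk⟩ := mem_hook.1 hy
  by_contra hyB
  have hout : ∀ k, (p^[k] ⟨y, hyA⟩ : ℕ) ∉ B := by
    intro k
    induction k with
    | zero => exact hyB
    | succ k ih => rw [Function.iterate_succ_apply']; exact hb.mapsTo_compl _ ih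
  exact hout k (hk ▸ fmin_mem hBne)

theorem hook_treeRestrict_left (hp : IsIncreasingTree A p) (hb : IsRootBranch p B)
    (hmB : fmin A ∉ B) {x : ℕ} (hx : x ∈ B.erase (fmin B)) :
    hook (treeRestrict hBA p) x = hook p x := by
  refine hook_eq_hook_of_agree hBA (isIncreasingTree_treeRestrict_left hBA hp hb hmB)
    (fun v hv ↦ (coe_treeRestrict_of_mem (hb.mapsTo _ (mem_erase.2 ⟨hv, v.2⟩))).symm)
    (fun w hw ↦ ?_) hx
  have hwB : (w : ℕ) ∈ B := by
    by_contra h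
    exact hb.mapsTo_compl w h (mem_erase.1 hw).2
  refine mem_erase.2 ⟨fun h ↦ hmB ?_, hwB⟩
  rw [← hb.apply_fmin w h]
  exact (mem_erase.1 hw).2

theorem hook_treeRestrict_right (hp : IsIncreasingTree A p) (hb : IsRootBranch p B)
    (hmA : fmin A ∈ A) (hmB : fmin A ∉ B) {x : ℕ} (hx : x ∈ (A \ B).erase (fmin A)) :
    hook (treeRestrict (sdiff_subset : A \ B ⊆ A) p) x = hook p x := by
  have hC := fmin_sdiff hmA hmB
  refine hook_eq_hook_of_agree sdiff_subset (isIncreasingTree_treeRestrict_right hp hb hmA hmB)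
    (fun v _ ↦ (coe_treeRestrict_of_mem
      (mem_sdiff.2 ⟨coe_mem _, hb.mapsTo_compl _ (mem_sdiff.1 v.2).2⟩)).symm)
    (fun w hw ↦ ?_) (hC ▸ hx)
  rw [hC, mem_erase, mem_sdiff] at hw ⊢
  refine ⟨fun h ↦ hw.1 ?_, w.2, fun hwB ↦ hw.2.2 ?_⟩
  · rw [(hp w).1 h, h]
  · by_cases hwm : (w : ℕ) = fmin B
    · exact (hw.1 (hb.apply_fmin w hwm)).elim
    · exact hb.mapsTo w (mem_erase.2 ⟨hwm, hwB⟩)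

theorem hookWeight_eq_of_isRootBranch (hp : IsIncreasingTree A p) (hb : IsRootBranch p B)
    (hmB : fmin A ∉ B) (hBne : B.Nonempty) :
    hookWeight p =
      #B * hookWeight (treeRestrict hBA p) *
        hookWeight (treeRestrict (sdiff_subset : A \ B ⊆ A) p) := by
  have hmA : fmin A ∈ A := fmin_mem (hBne.mono hBA)
  have hsplit : A.erase (fmin A) = B ∪ (A \ B).erase (fmin A) := by
    ext x
    simp only [mem_erase, mem_union, mem_sdiff]
    constructor
    · rintro ⟨hxm, hxA⟩
      exact (em (x ∈ B)).imp_right fun hxB ↦ ⟨hxm, hxA, hxB⟩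
    · rintro (hxB | ⟨hxm, hxA, -⟩)
      exacts [⟨fun h ↦ hmB (h ▸ hxB), hBA hxB⟩, ⟨hxm, hxA⟩]
  have hdisj : Disjoint B ((A \ B).erase (fmin A)) :=
    disjoint_left.2 fun x hxB hx ↦ (mem_sdiff.1 (mem_erase.1 hx).2).2 hxB
  rw [hookWeight, hsplit, prod_union hdisj, ← mul_prod_erase B _ (fmin_mem hBne),
    hook_eq_of_isRootBranch hBA hp hb hmB hBne, hookWeight, hookWeight, fmin_sdiff hmA hmB,
    prod_congr rfl fun x hx ↦ congrArg card (hook_treeRestrict_left hBA hp hb hmB hx),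
    prod_congr rfl fun x hx ↦ congrArg card (hook_treeRestrict_right hp hb hmA hmB hx), mul_assoc]

end RootBranch

theorem isRootBranch_hook {p : A → A} (hp : IsIncreasingTree A p) {s : ℕ}
    (hs : s ∈ A.erase (fmin A)) (hmin : ∀ y ∈ A.erase (fmin A), s ≤ y) :
    IsRootBranch p (hook p s) := by
  have hsA := (mem_erase.1 hs).2
  have hfmin : fmin (hook p s) = s := by
    refine fmin_eq_of_mem_of_forall_le
      (coe_mem_hook.2 ⟨0, rfl⟩ : ((⟨s, hsA⟩ : A) : ℕ) ∈ hook p s) ?_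
    intro y hy
    obtain ⟨_, k, hk⟩ := mem_hook.1 hy
    exact hk ▸ hp.iterate_le k _
  have hps : (p ⟨s, hsA⟩ : ℕ) = fmin A := by
    by_contra h
    exact ((hp ⟨s, hsA⟩).2 (mem_erase.1 hs).1).not_ge (hmin _ (mem_erase.2 ⟨h, coe_mem _⟩))
  refine ⟨fun u hu ↦ ?_, fun u hu ↦ ?_, fun u hu hpu ↦ hu ?_⟩
  · obtain ⟨hus, hu⟩ := mem_erase.1 hu
    obtain ⟨_ | k, hk⟩ := coe_mem_hook.1 hu
    · exact (hus (hk.trans hfmin.symm)).elim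
    · exact coe_mem_hook.2 ⟨k, hk⟩
  · obtain rfl : u = ⟨s, hsA⟩ := Subtype.ext (hu.trans hfmin)
    exact hps
  · obtain ⟨k, hk⟩ := coe_mem_hook.1 hpu
    exact coe_mem_hook.2 ⟨k + 1, hk⟩

theorem sum_hookWeight_isRootBranch (hBA : B ⊆ A) (hmB : fmin A ∉ B) (hBne : B.Nonempty) :
    ∑ p with IsIncreasingTree A p ∧ IsRootBranch p B, hookWeight p =
      #B * Icount B * Icount (A \ B) := by
  have hmA : fmin A ∈ A := fmin_mem (hBne.mono hBA)
  set root : A := ⟨fmin A, hmA⟩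
  rw [Icount_eq_sum_hookWeight B, Icount_eq_sum_hookWeight (A \ B), mul_assoc, sum_mul_sum,
    ← sum_product', mul_sum]
  refine sum_nbij' (fun p ↦ (treeRestrict hBA p, treeRestrict sdiff_subset p))
    (fun qr ↦ graft hBA root qr.1 qr.2) (fun p hp ↦ ?_) (fun qr hqr ↦ ?_) (fun p hp ↦ ?_)
    (fun qr hqr ↦ ?_) (fun p hp ↦ ?_)
  all_goals simp only [mem_filter, mem_univ, true_and, mem_product] at *
  · exact ⟨isIncreasingTree_treeRestrict_left hBA hp.1 hp.2 hmB,
      isIncreasingTree_treeRestrict_right hp.1 hp.2 hmA hmB⟩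
  · exact ⟨isIncreasingTree_graft hBA hqr.1 hqr.2 rfl hmB, isRootBranch_graft hBA rfl hBne⟩
  · exact graft_treeRestrict hBA hp.2 rfl
  · exact Prod.ext (treeRestrict_graft_left hBA hqr.1 rfl hmB) (treeRestrict_graft_right hBA)
  · rw [hookWeight_eq_of_isRootBranch hBA hp.1 hp.2 hmB hBne, mul_assoc]

theorem Icount_eq_sum_card_mul {s : ℕ} (hs : s ∈ A.erase (fmin A))
    (hmin : ∀ y ∈ A.erase (fmin A), s ≤ y) :
    Icount A = ∑ B ∈ A.powerset.filter (fun B => s ∈ B ∧ fmin A ∉ B),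
      #B * Icount B * Icount (A \ B) := by
  have hsA := (mem_erase.1 hs).2
  have hmaps : ∀ p ∈ ({p | IsIncreasingTree A p} : Finset (A → A)),
      hook p s ∈ A.powerset.filter (fun B => s ∈ B ∧ fmin A ∉ B) := by
    intro p hp
    simp only [mem_filter, mem_univ, true_and] at hp
    refine mem_filter.2 ⟨mem_powerset.2 (hook_subset p s),
      coe_mem_hook.2 (⟨0, rfl⟩ : ∃ k, (p^[k] ⟨s, hsA⟩ : ℕ) = s), fun hm ↦ ?_⟩
    obtain ⟨hmA, k, hk⟩ := mem_hook.1 hm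
    exact (mem_erase.1 hs).1
      (hk ▸ congrArg Subtype.val (hp.iterate_root (u := ⟨_, hmA⟩) rfl k))
  rw [Icount_eq_sum_hookWeight, ← sum_fiberwise_of_maps_to hmaps]
  refine sum_congr rfl fun B hB ↦ ?_
  obtain ⟨hBA, hsB, hmB⟩ := by simpa only [mem_filter, mem_powerset] using hB
  have hfmin : fmin B = s := fmin_eq_of_mem_of_forall_le hsB fun y hy ↦
    hmin y (mem_erase.2 ⟨fun h ↦ hmB (h ▸ hy), hBA hy⟩)
  rw [filter_filter, ← sum_hookWeight_isRootBranch hBA hmB ⟨s, hsB⟩]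
  refine sum_congr (filter_congr fun p _ ↦ and_congr_right fun hp ↦ ?_) fun _ _ ↦ rfl
  constructor
  · rintro rfl
    exact isRootBranch_hook hp hs hmin
  · intro hb
    rw [← hfmin]
    exact hook_eq_of_isRootBranch hBA hp hb hmB ⟨s, hsB⟩

theorem Icount_eq_card_pow (A : Finset ℕ) : Icount A = #A ^ (#A - 2) := by
  induction h : #A using Nat.strong_induction_on generalizing A with
  | _ n ih =>
    rcases le_or_gt n 1 with hn | hn
    · rw [Icount_of_card_le_one (h ▸ hn)]
      interval_cases n <;> rfl
    have hmA : fmin A ∈ A := fmin_mem (card_pos.1 (by omega))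
    have hs : fmin (A.erase (fmin A)) ∈ A.erase (fmin A) :=
      fmin_mem (card_pos.1 (by rw [card_erase_of_mem hmA]; omega))
    rw [Icount_eq_sum_card_mul hs fun y hy ↦ fmin_le hy, ← h,
      card_pow_card_sub_two_eq_sum (mem_erase.1 hs).2 hmA (mem_erase.1 hs).1]
    refine sum_congr rfl fun B hB ↦ ?_
    obtain ⟨hBA, hsB, hmB⟩ := by simpa only [mem_filter, mem_powerset] using hB
    have hB : #B < n := h ▸ card_lt_card ⟨hBA, fun h ↦ hmB (h hmA)⟩
    have hC : #(A \ B) < n :=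
      h ▸ card_lt_card ⟨sdiff_subset, fun h ↦ (mem_sdiff.1 (h (hBA hsB))).2 hsB⟩
    rw [ih _ hB B rfl, ih _ hC _ rfl, mul_assoc]

open scoped Classical in
theorem Icount_eq_and_recursion_general (A : Finset ℕ) :
    Icount A = A.card ^ (A.card - 2) ∧
      ∀ a ∈ A, a ≠ fmin A →
        A.card ^ (A.card - 2) =
          ∑ B ∈ A.powerset.filter (fun B => a ∈ B ∧ fmin A ∉ B),
            B.card * B.card ^ (B.card - 2) * (A \ B).card ^ ((A \ B).card - 2) :=
  ⟨Icount_eq_card_pow A,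
    fun _ ha haA ↦ card_pow_card_sub_two_eq_sum ha (fmin_mem ⟨_, ha⟩) haA⟩

open scoped Classical in
/-- Counting version of the `Θ` recursion: `I(A) = |A|^{|A|-2}` for `|A| ≥ 2`, and for any
fixed `a ∈ A ∖ {min A}`,
`|A|^{|A|-2} = ∑_{B ⊔ C = A, min A ∈ C, a ∈ B} |B| · |B|^{|B|-2} · |C|^{|C|-2}`
(with `k^{k-2}` interpreted as `1` when `k = 1`, which is automatic with truncated
subtraction). -/
theorem Icount_eq_and_recursion (A : Finset ℕ) (hA : 2 ≤ A.card) (hpos : ∀ i ∈ A, 0 < i) :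
    Icount A = A.card ^ (A.card - 2) ∧
      ∀ a ∈ A, a ≠ fmin A →
        A.card ^ (A.card - 2) =
          ∑ B ∈ A.powerset.filter (fun B => a ∈ B ∧ fmin A ∉ B),
            B.card * B.card ^ (B.card - 2) * (A \ B).card ^ ((A \ B).card - 2) :=
  Icount_eq_and_recursion_general A
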